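/- Let α : U → ℝ be a smooth fixed-mode solution of the spin-s Teukolsky equation, set β := r^(−2s)·D^s·α and Λ̃ := Λ − 2s = −(ℓ+s)(ℓ−s+1). Then for every integer N ≥ 1 the following identity holds pointwise on U: ∂ᵥ( (D/r²)^(N−s) · ∂ᵤ( ((r²/D)∂ᵤ)^N β ) ) = (D/r²)^(N−s+1) · [ ( N(N+1−2s) + Λ̃ − ( (1−s)(1−2s) + 3N(N+1−2s) )·(2M/r) ) · ((r²/D)∂ᵤ)^N β − 2M · N(N−s)(N−2s) · ((r²/D)∂ᵤ)^(N−1) β ]. (This is the ∂ᵤ-commuted Teukolsky equation of Proposition 8.1, eq. (8.8), in scalar fixed-angular-mode form; note that the spin-weighted operator Δ̊−s has eigenvalue Λ̃ = Λ − 2s on the ℓ-th mode, and that the j = 1 term enters with the sign (−1)^j.) -/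

import Mathlib

open scoped ContDiff

noncomputable section

/-- Partial derivative with respect to the first (`u`) null coordinate. -/
def pdu (f : ℝ × ℝ → ℝ) : ℝ × ℝ → ℝ := fun p => deriv (fun x => f (x, p.2)) p.1

/-- Partial derivative with respect to the second (`v`) null coordinate. -/
def pdv (f : ℝ × ℝ → ℝ) : ℝ × ℝ → ℝ := fun p => deriv (fun y => f (p.1, y)) p.2

/-- `D = 1 - 2M/r`. -/
def Dfun (M : ℝ) (r : ℝ × ℝ → ℝ) : ℝ × ℝ → ℝ := fun p => 1 - 2 * M / r p

/-- The weighted transversal derivative operator `(r²/D)∂ᵤ`. -/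
def Pu (M : ℝ) (r f : ℝ × ℝ → ℝ) : ℝ × ℝ → ℝ := fun p => (r p) ^ 2 / Dfun M r p * pdu f p

/-- `α` is a fixed-mode solution of the spin-`s` Teukolsky equation (Teuk:s) on `U`,
projected to spherical-harmonic number `ℓ`, i.e.
`∂ᵤ(r^(−2s) D^s ∂ᵥα) = D^(s+1) r^(−2−2s) Λ α − 2M D^(s+1) r^(−3−2s) (1+s)(1+2s) α`
with `Λ = −(ℓ−s)(ℓ+s+1)`. -/
def TeukSol (M : ℝ) (r : ℝ × ℝ → ℝ) (U : Set (ℝ × ℝ)) (s ℓ : ℤ) (α : ℝ × ℝ → ℝ) : Prop :=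
  ∀ p ∈ U,
    pdu (fun q => (r q) ^ (-(2 * s)) * (Dfun M r q) ^ s * pdv α q) p =
      (Dfun M r p) ^ (s + 1) * (r p) ^ (-2 - 2 * s) * ((-(ℓ - s) * (ℓ + s + 1) : ℤ) : ℝ) * α p
        - 2 * M * (Dfun M r p) ^ (s + 1) * (r p) ^ (-3 - 2 * s) *
          (((1 + s) * (1 + 2 * s) : ℤ) : ℝ) * α p

/-!
Write `w = D/r²`, so that `∂ᵤ = w P` with `P = (r²/D)∂ᵤ`, and `g = (2r - 6M)/r²`, so that
`∂ᵤ w = w g` and `∂ᵥ g = w (12M/r - 2)`. If `∂ᵥ(w^k ∂ᵤ f) = w^(k+1) h`, apply `∂ᵤ` to this and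
commute the mixed partials of `w^(k+1) P f = w^k ∂ᵤ f`: the terms containing `g` cancel, leaving
`∂ᵥ(w^(k+1) ∂ᵤ(P f)) = w^(k+2) (P h + (k+1)(2 - 12M/r) P f)`.
Since `r^(-2s) D^s = w^s`, the Teukolsky equation for `α` is the case `N = 0` of the identity
for `β = w^s α`, and the commutation step yields the case `N + 1` from the case `N`, the
coefficients obeying the recursions of (8.8).
-/

open Set Filter Topology

section PartialDerivatives

variable {f g : ℝ × ℝ → ℝ} {p : ℝ × ℝ}

theorem DifferentiableAt.hasDerivAt_pdu (hf : DifferentiableAt ℝ f p) :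
    HasDerivAt (fun x => f (x, p.2)) (pdu f p) p.1 :=
  (hf.comp p.1 (differentiableAt_id.prodMk (differentiableAt_const _))).hasDerivAt

theorem DifferentiableAt.hasDerivAt_pdv (hf : DifferentiableAt ℝ f p) :
    HasDerivAt (fun y => f (p.1, y)) (pdv f p) p.2 :=
  (hf.comp p.2 ((differentiableAt_const _).prodMk differentiableAt_id)).hasDerivAt

theorem Filter.EventuallyEq.pdu_eq (h : f =ᶠ[𝓝 p] g) : pdu f p = pdu g p :=
  (h.comp_tendsto ((Continuous.prodMk_left p.2).tendsto' _ _ rfl)).deriv_eq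

theorem Filter.EventuallyEq.pdv_eq (h : f =ᶠ[𝓝 p] g) : pdv f p = pdv g p :=
  (h.comp_tendsto ((Continuous.prodMk_right p.1).tendsto' _ _ rfl)).deriv_eq

theorem DifferentiableAt.pdu_eq_fderiv (hf : DifferentiableAt ℝ f p) :
    pdu f p = fderiv ℝ f p (1, 0) :=
  (hf.hasFDerivAt.comp_hasDerivAt p.1 ((hasDerivAt_id _).prodMk (hasDerivAt_const _ _))).deriv

theorem DifferentiableAt.pdv_eq_fderiv (hf : DifferentiableAt ℝ f p) :
    pdv f p = fderiv ℝ f p (0, 1) :=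
  (hf.hasFDerivAt.comp_hasDerivAt p.2 ((hasDerivAt_const _ _).prodMk (hasDerivAt_id _))).deriv

theorem ContDiffAt.pdu_pdv_comm (hf : ContDiffAt ℝ 2 f p) : pdu (pdv f) p = pdv (pdu f) p := by
  have hdiff : ∀ᶠ q in 𝓝 p, DifferentiableAt ℝ f q :=
    (hf.eventually (by simp)).mono fun q hq => hq.differentiableAt (by simp)
  have hf' : DifferentiableAt ℝ (fderiv ℝ f) p :=
    (hf.fderiv_right (m := 1) le_rfl).differentiableAt one_ne_zero
  have hv : pdv f =ᶠ[𝓝 p] fun q => fderiv ℝ f q (0, 1) :=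
    hdiff.mono fun q hq => hq.pdv_eq_fderiv
  have hu : pdu f =ᶠ[𝓝 p] fun q => fderiv ℝ f q (1, 0) :=
    hdiff.mono fun q hq => hq.pdu_eq_fderiv
  rw [hv.pdu_eq, hu.pdv_eq, (hf'.clm_apply (differentiableAt_const _)).pdu_eq_fderiv,
    (hf'.clm_apply (differentiableAt_const _)).pdv_eq_fderiv,
    fderiv_clm_apply hf' (differentiableAt_const _), fderiv_clm_apply hf' (differentiableAt_const _)]
  simpa using hf.isSymmSndFDerivAt (by simp) (1, 0) (0, 1)

variable {U : Set (ℝ × ℝ)} {n : WithTop ℕ∞}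

theorem ContDiffOn.pdu (hf : ContDiffOn ℝ (n + 1) f U) (hU : IsOpen U) :
    ContDiffOn ℝ n (pdu f) U :=
  ((hf.fderiv_of_isOpen hU le_rfl).clm_apply contDiffOn_const).congr fun q hq =>
    ((hf.contDiffAt (hU.mem_nhds hq)).differentiableAt (by simp)).pdu_eq_fderiv

theorem ContDiffOn.pdv (hf : ContDiffOn ℝ (n + 1) f U) (hU : IsOpen U) :
    ContDiffOn ℝ n (pdv f) U :=
  ((hf.fderiv_of_isOpen hU le_rfl).clm_apply contDiffOn_const).congr fun q hq =>
    ((hf.contDiffAt (hU.mem_nhds hq)).differentiableAt (by simp)).pdv_eq_fderiv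

end PartialDerivatives

theorem ContDiffOn.zpow {𝕜 E : Type*} [NontriviallyNormedField 𝕜] [NormedAddCommGroup E]
    [NormedSpace 𝕜 E] {n : WithTop ℕ∞} {f : E → 𝕜} {s : Set E} (hf : ContDiffOn 𝕜 n f s)
    (h : ∀ x ∈ s, f x ≠ 0) (m : ℤ) : ContDiffOn 𝕜 n (fun x => f x ^ m) s := by
  cases m with
  | ofNat k => simpa using hf.pow k
  | negSucc k =>
    simp only [zpow_negSucc]
    exact (hf.pow (k + 1)).inv fun x hx => pow_ne_zero _ (h x hx)

theorem zpow_neg_two_mul_mul_zpow {K : Type*} [Field K] (x d : K) (k : ℤ) :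
    x ^ (-(2 * k)) * d ^ k = (d / x ^ 2) ^ k := by
  rw [div_zpow, ← zpow_natCast, ← zpow_mul, div_eq_mul_inv, ← zpow_neg, mul_comm]
  push_cast
  ring_nf

/-- `weight M (r q)` is `D/r²`, definitionally `Dfun M r q / r q ^ 2`. -/
def weight (M x : ℝ) : ℝ := (1 - 2 * M / x) / x ^ 2

/-- `weightLogDeriv M (r q)` is `∂ᵤ log (D/r²)`. -/
def weightLogDeriv (M x : ℝ) : ℝ := (2 * x - 6 * M) / x ^ 2

theorem hasDerivAt_weight {M x : ℝ} (hx : x ≠ 0) :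
    HasDerivAt (weight M) ((6 * M - 2 * x) / x ^ 4) x := by
  have h := ((hasDerivAt_const x (1 : ℝ)).sub ((hasDerivAt_const x (2 * M)).div (hasDerivAt_id x)
    hx)).div (hasDerivAt_pow 2 x) (pow_ne_zero 2 hx)
  refine h.congr_deriv ?_
  simp only [Pi.sub_apply, Pi.div_apply, id]
  field_simp
  ring

theorem hasDerivAt_weightLogDeriv {M x : ℝ} (hx : x ≠ 0) :
    HasDerivAt (weightLogDeriv M) ((12 * M - 2 * x) / x ^ 3) x := by
  have h := (((hasDerivAt_id x).const_mul 2).sub_const (6 * M)).div (hasDerivAt_pow 2 x)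
    (pow_ne_zero 2 hx)
  refine h.congr_deriv ?_
  simp only [id]
  field_simp
  ring

theorem Pu_eq_weight_zpow_mul (M : ℝ) (r f : ℝ × ℝ → ℝ) :
    Pu M r f = fun q => weight M (r q) ^ (-1 : ℤ) * pdu f q := by
  funext q
  simp only [Pu, Dfun, weight, zpow_neg_one, inv_div]

/-- The bracket on the right-hand side of (8.8). For `N = 0` its last term vanishes, so the
truncation of `N - 1` does not matter. -/
def commutedSource (M : ℝ) (r β : ℝ × ℝ → ℝ) (s ℓ : ℤ) (N : ℕ) (p : ℝ × ℝ) : ℝ :=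
  ((((N : ℤ) * ((N : ℤ) + 1 - 2 * s) : ℤ) : ℝ) + ((-(ℓ - s) * (ℓ + s + 1) - 2 * s : ℤ) : ℝ)
      - (((1 - s) * (1 - 2 * s) + 3 * (N : ℤ) * ((N : ℤ) + 1 - 2 * s) : ℤ) : ℝ) * (2 * M / r p)) *
      (Pu M r)^[N] β p
    - 2 * M * (((N : ℤ) * ((N : ℤ) - s) * ((N : ℤ) - 2 * s) : ℤ) : ℝ) * (Pu M r)^[N - 1] β p

structure IsSchwarzschildRadius (M : ℝ) (r : ℝ × ℝ → ℝ) (U : Set (ℝ × ℝ)) : Prop where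
  nonneg : 0 ≤ M
  isOpen : IsOpen U
  contDiffOn : ContDiffOn ℝ ∞ r U
  two_mul_lt : ∀ p ∈ U, 2 * M < r p
  pdu_eq : ∀ p ∈ U, pdu r p = -(1 - 2 * M / r p)
  pdv_eq : ∀ p ∈ U, pdv r p = 1 - 2 * M / r p

namespace IsSchwarzschildRadius

variable {M : ℝ} {r f α β : ℝ × ℝ → ℝ} {U : Set (ℝ × ℝ)} {p q : ℝ × ℝ} {s ℓ : ℤ}
variable (hS : IsSchwarzschildRadius M r U)
include hS

theorem pos (hp : p ∈ U) : 0 < r p := by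
  linarith [hS.nonneg, hS.two_mul_lt p hp]

theorem weight_pos (hp : p ∈ U) : 0 < weight M (r p) := by
  have hr := hS.pos hp
  have : 2 * M / r p < 1 := (div_lt_one hr).2 (hS.two_mul_lt p hp)
  exact div_pos (by linarith) (by positivity)

theorem differentiableAt (hf : ContDiffOn ℝ ∞ f U) (hp : p ∈ U) : DifferentiableAt ℝ f p :=
  (hf.contDiffAt (hS.isOpen.mem_nhds hp)).differentiableAt (by simp)

theorem hasDerivAt_u_comp {φ : ℝ → ℝ} {φ' : ℝ} (hφ : HasDerivAt φ φ' (r p)) (hp : p ∈ U) :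
    HasDerivAt (fun x => φ (r (x, p.2))) (φ' * -(1 - 2 * M / r p)) p.1 := by
  rw [← hS.pdu_eq p hp]
  exact hφ.comp p.1 (hS.differentiableAt hS.contDiffOn hp).hasDerivAt_pdu

theorem hasDerivAt_v_comp {φ : ℝ → ℝ} {φ' : ℝ} (hφ : HasDerivAt φ φ' (r p)) (hp : p ∈ U) :
    HasDerivAt (fun y => φ (r (p.1, y))) (φ' * (1 - 2 * M / r p)) p.2 := by
  rw [← hS.pdv_eq p hp]
  exact hφ.comp p.2 (hS.differentiableAt hS.contDiffOn hp).hasDerivAt_pdv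

theorem hasDerivAt_u_weight_zpow (hp : p ∈ U) (m : ℤ) :
    HasDerivAt (fun x => weight M (r (x, p.2)) ^ m)
      (m * weightLogDeriv M (r p) * weight M (r p) ^ m) p.1 := by
  have hr := (hS.pos hp).ne'
  have hw := (hS.weight_pos hp).ne'
  have hD : r p - 2 * M ≠ 0 := (sub_pos.2 (hS.two_mul_lt p hp)).ne'
  have h := hS.hasDerivAt_u_comp
    ((hasDerivAt_zpow m _ (Or.inl hw)).comp (r p) (hasDerivAt_weight hr)) hp
  refine h.congr_deriv ?_
  rw [zpow_sub_one₀ hw]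
  generalize weight M (r p) ^ m = A
  simp only [weight, weightLogDeriv]
  field_simp
  ring

theorem hasDerivAt_v_weightLogDeriv (hp : p ∈ U) :
    HasDerivAt (fun y => weightLogDeriv M (r (p.1, y)))
      (weight M (r p) * (12 * M / r p - 2)) p.2 := by
  have hr := (hS.pos hp).ne'
  refine (hS.hasDerivAt_v_comp (hasDerivAt_weightLogDeriv hr) hp).congr_deriv ?_
  simp only [weight]
  field_simp

theorem hasDerivAt_u_two_mul_div (hp : p ∈ U) :
    HasDerivAt (fun x => 2 * M / r (x, p.2)) (2 * M * weight M (r p)) p.1 := by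
  have hr := (hS.pos hp).ne'
  have h := hS.hasDerivAt_u_comp ((hasDerivAt_const (r p) (2 * M)).div (hasDerivAt_id (r p)) hr) hp
  refine h.congr_deriv ?_
  simp only [weight, id]
  field_simp
  ring

theorem pdu_weight_zpow_mul (hf : DifferentiableAt ℝ f p) (hp : p ∈ U) (m : ℤ) :
    pdu (fun q => weight M (r q) ^ m * f q) p =
      m * weightLogDeriv M (r p) * weight M (r p) ^ m * f p + weight M (r p) ^ m * pdu f p :=
  ((hS.hasDerivAt_u_weight_zpow hp m).mul hf.hasDerivAt_pdu).deriv

theorem contDiffOn_weight_zpow (m : ℤ) : ContDiffOn ℝ ∞ (fun q => weight M (r q) ^ m) U := by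
  have hr : ∀ q ∈ U, r q ≠ 0 := fun q hq => (hS.pos hq).ne'
  refine ContDiffOn.zpow ?_ (fun q hq => (hS.weight_pos hq).ne') m
  exact (contDiffOn_const.sub (contDiffOn_const.div hS.contDiffOn hr)).div (hS.contDiffOn.pow 2)
    fun q hq => pow_ne_zero 2 (hr q hq)

theorem pdu_eq_weight_mul_Pu (hq : q ∈ U) : pdu f q = weight M (r q) * Pu M r f q := by
  simp only [Pu_eq_weight_zpow_mul, zpow_neg_one]
  rw [mul_inv_cancel_left₀ (hS.weight_pos hq).ne']

theorem contDiffOn_Pu (hf : ContDiffOn ℝ ∞ f U) : ContDiffOn ℝ ∞ (Pu M r f) U := by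
  rw [Pu_eq_weight_zpow_mul]
  exact (hS.contDiffOn_weight_zpow (-1)).mul (hf.pdu hS.isOpen)

theorem contDiffOn_iterate_Pu (hf : ContDiffOn ℝ ∞ f U) (n : ℕ) :
    ContDiffOn ℝ ∞ ((Pu M r)^[n] f) U := by
  induction n with
  | zero => exact hf
  | succ n ih => rw [Function.iterate_succ_apply']; exact hS.contDiffOn_Pu ih

theorem pdu_iterate_Pu (hq : q ∈ U) (N : ℕ) :
    pdu ((Pu M r)^[N] f) q = weight M (r q) * (Pu M r)^[N + 1] f q := by
  rw [Function.iterate_succ_apply', hS.pdu_eq_weight_mul_Pu hq]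

theorem natCast_mul_pdu_iterate_pred_Pu (hq : q ∈ U) (N : ℕ) :
    (N : ℝ) * pdu ((Pu M r)^[N - 1] f) q = N * (weight M (r q) * (Pu M r)^[N] f q) := by
  cases N with
  | zero => simp
  | succ N => rw [Nat.add_sub_cancel, hS.pdu_iterate_Pu hq]

theorem pdv_weight_zpow_mul_pdu_Pu {h : ℝ × ℝ → ℝ} (hf : ContDiffOn ℝ ∞ f U)
    (hh : DifferentiableAt ℝ h p) (hp : p ∈ U) (k : ℤ)
    (hfh : ∀ q ∈ U,
      pdv (fun q => weight M (r q) ^ k * pdu f q) q = weight M (r q) ^ (k + 1) * h q) :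
    pdv (fun q => weight M (r q) ^ (k + 1) * pdu (Pu M r f) q) p =
      weight M (r p) ^ (k + 2) * (Pu M r h p + (k + 1) * (2 - 12 * M / r p) * Pu M r f p) := by
  have hU := hS.isOpen.mem_nhds hp
  have hw := (hS.weight_pos hp).ne'
  have hPf := hS.contDiffOn_Pu hf
  set F := fun q => weight M (r q) ^ (k + 1) * Pu M r f q
  have hFsmooth : ContDiffOn ℝ ∞ F U := (hS.contDiffOn_weight_zpow _).mul hPf
  have hfF : EqOn (fun q => weight M (r q) ^ k * pdu f q) F U := fun q hq => by
    simp only [F, hS.pdu_eq_weight_mul_Pu hq, zpow_add_one₀ (hS.weight_pos hq).ne']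
    ring
  have hvF : EqOn (pdv F) (fun q => weight M (r q) ^ (k + 1) * h q) U := fun q hq => by
    rw [← (hfF.eventuallyEq_of_mem (hS.isOpen.mem_nhds hq)).pdv_eq]
    exact hfh q hq
  have huF : EqOn (pdu F) (fun q => (k + 1) * weightLogDeriv M (r q) *
      (weight M (r q) ^ (k + 1) * Pu M r f q) +
      weight M (r q) ^ (k + 1) * pdu (Pu M r f) q) U := fun q hq =>
    (hS.pdu_weight_zpow_mul (hS.differentiableAt hPf hq) hq _).trans (by push_cast; ring)
  have huvF : pdu (pdv F) p = (k + 1) * weightLogDeriv M (r p) *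
      weight M (r p) ^ (k + 1) * h p + weight M (r p) ^ (k + 1) * pdu h p := by
    rw [(hvF.eventuallyEq_of_mem hU).pdu_eq, hS.pdu_weight_zpow_mul hh hp]
    push_cast
    ring
  have hvuF : pdv (pdu F) p = (k + 1) * (weight M (r p) * (12 * M / r p - 2)) *
      (weight M (r p) ^ (k + 1) * Pu M r f p) +
      (k + 1) * weightLogDeriv M (r p) * pdv F p +
      pdv (fun q => weight M (r q) ^ (k + 1) * pdu (Pu M r f) q) p := by
    rw [(huF.eventuallyEq_of_mem hU).pdv_eq]
    exact ((((hS.hasDerivAt_v_weightLogDeriv hp).const_mul ((k : ℝ) + 1)).mul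
      (hS.differentiableAt hFsmooth hp).hasDerivAt_pdv).add
      (hS.differentiableAt ((hS.contDiffOn_weight_zpow (k + 1)).mul
        (hPf.pdu hS.isOpen)) hp).hasDerivAt_pdv).deriv
  have hcomm : pdu (pdv F) p = pdv (pdu F) p :=
    ((hFsmooth.contDiffAt hU).of_le (by norm_cast)).pdu_pdv_comm
  rw [hS.pdu_eq_weight_mul_Pu hp (f := h)] at huvF
  rw [hvF hp] at hvuF
  rw [show k + 2 = (k + 1) + 1 by ring, zpow_add_one₀ hw]
  linear_combination huvF - hcomm - hvuF

theorem pdu_pdv_of_teukSol (hα : ContDiffOn ℝ ∞ α U) (hT : TeukSol M r U s ℓ α) (hp : p ∈ U) :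
    pdu (pdv α) p = weight M (r p) * (((-(ℓ - s) * (ℓ + s + 1) : ℤ) : ℝ)
        - (((1 + s) * (1 + 2 * s) : ℤ) : ℝ) * (2 * M / r p)) * α p
      - s * weightLogDeriv M (r p) * pdv α p := by
  have hr := (hS.pos hp).ne'
  have hw := (hS.weight_pos hp).ne'
  have hcoeff : (fun q => r q ^ (-(2 * s)) * Dfun M r q ^ s * pdv α q) =
      fun q => weight M (r q) ^ s * pdv α q := by
    funext q
    rw [zpow_neg_two_mul_mul_zpow]
    rfl
  have hD2 : Dfun M r p ^ (s + 1) * r p ^ (-2 - 2 * s) = weight M (r p) ^ s * weight M (r p) := by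
    rw [show -2 - 2 * s = -(2 * (s + 1)) by ring, mul_comm, zpow_neg_two_mul_mul_zpow]
    exact zpow_add_one₀ hw s
  have hD3 : Dfun M r p ^ (s + 1) * r p ^ (-3 - 2 * s) =
      weight M (r p) ^ s * weight M (r p) / r p := by
    rw [show -3 - 2 * s = (-2 - 2 * s) + -1 by ring, zpow_add₀ hr, ← mul_assoc, hD2, zpow_neg_one,
      div_eq_mul_inv]
  have hT := hT p hp
  rw [hcoeff, hS.pdu_weight_zpow_mul (hS.differentiableAt (hα.pdv hS.isOpen) hp) hp, hD2, mul_assoc (2 * M), hD3] at hT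
  apply mul_left_cancel₀ (zpow_ne_zero s hw)
  linear_combination hT

theorem pdv_weight_zpow_mul_pdu_of_teukSol (hα : ContDiffOn ℝ ∞ α U) (hT : TeukSol M r U s ℓ α)
    (hp : p ∈ U) :
    pdv (fun q => weight M (r q) ^ (-s) * pdu (fun q => weight M (r q) ^ s * α q) q) p =
      weight M (r p) ^ (1 - s) * ((((-(ℓ - s) * (ℓ + s + 1) - 2 * s : ℤ) : ℝ)
        - (((1 - s) * (1 - 2 * s) : ℤ) : ℝ) * (2 * M / r p)) * (weight M (r p) ^ s * α p)) := by
  have hU := hS.isOpen.mem_nhds hp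
  have hw := (hS.weight_pos hp).ne'
  have hu : EqOn (fun q => weight M (r q) ^ (-s) * pdu (fun q => weight M (r q) ^ s * α q) q)
      (fun q => s * weightLogDeriv M (r q) * α q + pdu α q) U := fun q hq => by
    have hwq := zpow_ne_zero s (hS.weight_pos hq).ne'
    simp only [hS.pdu_weight_zpow_mul (hS.differentiableAt hα hq) hq, zpow_neg]
    field_simp
  have hv : pdv (fun q => s * weightLogDeriv M (r q) * α q + pdu α q) p =
      s * (weight M (r p) * (12 * M / r p - 2)) * α p +
        s * weightLogDeriv M (r p) * pdv α p + pdv (pdu α) p :=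
    ((((hS.hasDerivAt_v_weightLogDeriv hp).const_mul (s : ℝ)).mul
      (hS.differentiableAt hα hp).hasDerivAt_pdv).add
      (hS.differentiableAt (hα.pdu hS.isOpen) hp).hasDerivAt_pdv).deriv.trans (by ring)
  have hcomm := ((hα.contDiffAt hU).of_le (by norm_cast)).pdu_pdv_comm
  have hw1 : weight M (r p) ^ (1 - s) * weight M (r p) ^ s = weight M (r p) := by
    rw [← zpow_add₀ hw]
    simp
  rw [(hu.eventuallyEq_of_mem hU).pdv_eq, hv, ← hcomm, hS.pdu_pdv_of_teukSol hα hT hp]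
  push_cast
  linear_combination (-((-((ℓ : ℝ) - s) * (ℓ + s + 1) - 2 * s
    - (1 - s) * (1 - 2 * s) * (2 * M / r p)) * α p)) * hw1

theorem contDiffOn_commutedSource (hβ : ContDiffOn ℝ ∞ β U) (N : ℕ) :
    ContDiffOn ℝ ∞ (commutedSource M r β s ℓ N) U := by
  have hr : ContDiffOn ℝ ∞ (fun q => 2 * M / r q) U :=
    contDiffOn_const.div hS.contDiffOn fun q hq => (hS.pos hq).ne'
  exact ((contDiffOn_const.sub (contDiffOn_const.mul hr)).mul
    (hS.contDiffOn_iterate_Pu hβ N)).sub (contDiffOn_const.mul (hS.contDiffOn_iterate_Pu hβ _))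

theorem Pu_commutedSource (hβ : ContDiffOn ℝ ∞ β U) (hq : q ∈ U) (N : ℕ) :
    Pu M r (commutedSource M r β s ℓ N) q =
      commutedSource M r β s ℓ (N + 1) q - ((N : ℝ) + 1 - s) * (2 - 12 * M / r q) *
        (Pu M r)^[N + 1] β q := by
  have hw := (hS.weight_pos hq).ne'
  have hpdu : pdu (commutedSource M r β s ℓ N) q = weight M (r q) * (
      commutedSource M r β s ℓ (N + 1) q - ((N : ℝ) + 1 - s) * (2 - 12 * M / r q) *
        (Pu M r)^[N + 1] β q) := by
    refine ((((hasDerivAt_const q.1 _).sub ((hS.hasDerivAt_u_two_mul_div hq).const_mul _)).mul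
      (hS.differentiableAt (hS.contDiffOn_iterate_Pu hβ N) hq).hasDerivAt_pdu).sub
      ((hS.differentiableAt (hS.contDiffOn_iterate_Pu hβ (N - 1)) hq).hasDerivAt_pdu.const_mul
        _)).deriv.trans ?_
    rw [hS.pdu_iterate_Pu hq]
    have hpred := hS.natCast_mul_pdu_iterate_pred_Pu (f := β) hq N
    simp only [commutedSource, Nat.add_sub_cancel, Pi.sub_apply]
    push_cast
    linear_combination (-(2 * M * ((N - s) * (N - 2 * s)))) * hpred
  exact mul_left_cancel₀ hw ((hS.pdu_eq_weight_mul_Pu hq).symm.trans hpdu)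

theorem pdv_weight_zpow_mul_pdu_iterate_Pu (hβ : ContDiffOn ℝ ∞ β U)
    (h₀ : ∀ q ∈ U, pdv (fun q => weight M (r q) ^ (-s) * pdu β q) q =
      weight M (r q) ^ (1 - s) * ((((-(ℓ - s) * (ℓ + s + 1) - 2 * s : ℤ) : ℝ)
        - (((1 - s) * (1 - 2 * s) : ℤ) : ℝ) * (2 * M / r q)) * β q)) (N : ℕ) :
    ∀ q ∈ U, pdv (fun q => weight M (r q) ^ ((N : ℤ) - s) * pdu ((Pu M r)^[N] β) q) q =
      weight M (r q) ^ ((N : ℤ) - s + 1) * commutedSource M r β s ℓ N q := by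
  induction N with
  | zero =>
    intro q hq
    simp only [Nat.cast_zero, zero_sub, Function.iterate_zero, id, h₀ q hq, commutedSource]
    rw [show -s + 1 = 1 - s by ring]
    push_cast
    ring
  | succ N ih =>
    intro q hq
    have h := hS.pdv_weight_zpow_mul_pdu_Pu (hS.contDiffOn_iterate_Pu hβ N)
      (hS.differentiableAt (hS.contDiffOn_commutedSource hβ N) hq) hq _ ih
    rw [hS.Pu_commutedSource hβ hq, ← Function.iterate_succ_apply' (Pu M r)] at h
    rw [show ((N + 1 : ℕ) : ℤ) - s = (N : ℤ) - s + 1 by push_cast; ring, h,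
      show (N : ℤ) - s + 1 + 1 = (N : ℤ) - s + 2 by ring]
    push_cast
    ring

end IsSchwarzschildRadius

theorem commuted_teukolsky_equation_u_general
    (M : ℝ) (hM : 0 ≤ M)
    (U : Set (ℝ × ℝ)) (hUopen : IsOpen U)
    (r : ℝ × ℝ → ℝ) (hr : ContDiffOn ℝ ∞ r U)
    (hr2M : ∀ p ∈ U, 2 * M < r p)
    (hru : ∀ p ∈ U, pdu r p = -(1 - 2 * M / r p))
    (hrv : ∀ p ∈ U, pdv r p = 1 - 2 * M / r p)
    (s ℓ : ℤ)
    (α : ℝ × ℝ → ℝ) (hα : ContDiffOn ℝ ∞ α U)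
    (hTeuk : TeukSol M r U s ℓ α)
    (β : ℝ × ℝ → ℝ)
    (hβ : β = fun q => (r q) ^ (-(2 * s)) * (Dfun M r q) ^ s * α q) :
    ∀ N : ℕ, 1 ≤ N → ∀ p ∈ U,
      pdv (fun q => (Dfun M r q / (r q) ^ 2) ^ ((N : ℤ) - s) * pdu ((Pu M r)^[N] β) q) p =
        (Dfun M r p / (r p) ^ 2) ^ ((N : ℤ) - s + 1) *
          ((((((N : ℤ) * ((N : ℤ) + 1 - 2 * s) : ℤ) : ℝ)
                + ((-(ℓ - s) * (ℓ + s + 1) - 2 * s : ℤ) : ℝ)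
                - (((1 - s) * (1 - 2 * s) + 3 * (N : ℤ) * ((N : ℤ) + 1 - 2 * s) : ℤ) : ℝ) *
                  (2 * M / r p)) *
              ((Pu M r)^[N] β) p) -
            2 * M * (((N : ℤ) * ((N : ℤ) - s) * ((N : ℤ) - 2 * s) : ℤ) : ℝ) *
              ((Pu M r)^[N - 1] β) p) := by
  intro N _ p hp
  have hS : IsSchwarzschildRadius M r U := ⟨hM, hUopen, hr, hr2M, hru, hrv⟩
  have hβw : β = fun q => weight M (r q) ^ s * α q := by
    simp only [hβ, zpow_neg_two_mul_mul_zpow]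
    rfl
  subst hβw
  exact hS.pdv_weight_zpow_mul_pdu_iterate_Pu ((hS.contDiffOn_weight_zpow s).mul hα)
    (fun q hq => hS.pdv_weight_zpow_mul_pdu_of_teukSol hα hTeuk hq) N p hp

/-- The `∂ᵤ`-commuted Teukolsky equation (Proposition 8.1, eq. (8.8)), in scalar
fixed-angular-mode form, for `β = r^(−2s) D^s α` and `Λ̃ = Λ − 2s`. -/
theorem commuted_teukolsky_equation_u
    (M : ℝ) (hM : 0 ≤ M)
    (U : Set (ℝ × ℝ)) (hUopen : IsOpen U)
    (r : ℝ × ℝ → ℝ) (hr : ContDiffOn ℝ ∞ r U)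
    (hr2M : ∀ p ∈ U, 2 * M < r p)
    (hru : ∀ p ∈ U, pdu r p = -(1 - 2 * M / r p))
    (hrv : ∀ p ∈ U, pdv r p = 1 - 2 * M / r p)
    (s ℓ : ℤ) (hsl : |s| ≤ ℓ)
    (α : ℝ × ℝ → ℝ) (hα : ContDiffOn ℝ ∞ α U)
    (hTeuk : TeukSol M r U s ℓ α)
    (β : ℝ × ℝ → ℝ)
    (hβ : β = fun q => (r q) ^ (-(2 * s)) * (Dfun M r q) ^ s * α q) :
    ∀ N : ℕ, 1 ≤ N → ∀ p ∈ U,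
      pdv (fun q => (Dfun M r q / (r q) ^ 2) ^ ((N : ℤ) - s) * pdu ((Pu M r)^[N] β) q) p =
        (Dfun M r p / (r p) ^ 2) ^ ((N : ℤ) - s + 1) *
          ((((((N : ℤ) * ((N : ℤ) + 1 - 2 * s) : ℤ) : ℝ)
                + ((-(ℓ - s) * (ℓ + s + 1) - 2 * s : ℤ) : ℝ)
                - (((1 - s) * (1 - 2 * s) + 3 * (N : ℤ) * ((N : ℤ) + 1 - 2 * s) : ℤ) : ℝ) *
                  (2 * M / r p)) *
              ((Pu M r)^[N] β) p) -
            2 * M * (((N : ℤ) * ((N : ℤ) - s) * ((N : ℤ) - 2 * s) : ℤ) : ℝ) *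
              ((Pu M r)^[N - 1] β) p) :=
  commuted_teukolsky_equation_u_general M hM U hUopen r hr hr2M hru hrv s ℓ α hα hTeuk β hβ
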